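/- Let H be a finite-dimensional real inner product space, S a set of vectors of norm at most 1, ε > 0, and F : ℕ → ℝ with F(n) > 0 for all n. Then for every f ∈ H with ‖f‖ ≤ 1 there exist M : ℕ (bounded by a quantity depending only on F and ε), a decomposition f = f_str + f_psd + f_err, where f_str is a linear combination of at most M elements of S with coefficients in [−M, M], |⟨f_psd, v⟩| ≤ 1/F(M) for all v ∈ S, and ‖f_err‖ ≤ ε. -/

import Mathlib

/-!
Energy increment. Run the orthogonal greedy algorithm at threshold `δ`: as long as some `v ∈ S`
correlates by more than `δ` with the residual `f - P f` (`P` the projection onto the span of the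
vectors chosen so far), add `v`. Each step raises the energy `‖P f‖² ≤ 1` by `δ²`, so it stops
after at most `δ⁻²` steps with a `δ`-pseudorandom residual. A vector added this way lies at
distance at least `δ` from the earlier span, so `P f` has coefficients at most `(1 + δ⁻¹) ^ δ⁻²`.

Running it at thresholds `δ₀ ≥ δ₁ ≥ ⋯`, each continuing the previous family and with `δⱼ₊₁` at
most `1 / F Mⱼ` for the complexity bound `Mⱼ` of stage `j`, the energy cannot grow by more than
`ε²` at each of `⌊ε⁻²⌋ + 1` consecutive stages. At a stage where it does not,
`f = Pⱼ f + (f - Pⱼ₊₁ f) + (Pⱼ₊₁ f - Pⱼ f)`, and `‖Pⱼ₊₁ f - Pⱼ f‖² ≤ ε²` by Pythagoras.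
-/

open RealInnerProductSpace

open Submodule Finset

namespace StrongStructure

variable {H : Type*} [NormedAddCommGroup H] [InnerProductSpace ℝ H]

section Projection

variable {K : Submodule ℝ H} [K.HasOrthogonalProjection]

theorem norm_sq_starProjection_add_norm_sq_sub (x : H) :
    ‖K.starProjection x‖ ^ 2 + ‖x - K.starProjection x‖ ^ 2 = ‖x‖ ^ 2 := by
  rw [norm_sq_eq_add_norm_sq_starProjection x K, starProjection_orthogonal_val]

theorem norm_sub_starProjection_le (x : H) : ‖x - K.starProjection x‖ ≤ ‖x‖ :=
  starProjection_orthogonal_val (K := K) x ▸ norm_starProjection_apply_le _ x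

theorem abs_inner_sub_starProjection_le (x w : H) :
    |⟪x - K.starProjection x, w⟫| ≤ ‖x‖ * ‖w - K.starProjection w‖ := by
  have hw : ⟪x - K.starProjection x, w⟫ = ⟪x - K.starProjection x, w - K.starProjection w⟫ := by
    rw [inner_sub_right, starProjection_inner_eq_zero x _ (K.starProjection_apply_mem w), sub_zero]
  rw [hw]
  exact (abs_real_inner_le_norm _ _).trans
    (mul_le_mul_of_nonneg_right (norm_sub_starProjection_le x) (norm_nonneg _))

theorem sq_norm_starProjection_le_one {x : H} (hx : ‖x‖ ≤ 1) : ‖K.starProjection x‖ ^ 2 ≤ 1 :=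
  pow_le_one₀ (norm_nonneg _) ((norm_starProjection_apply_le K x).trans hx)

theorem abs_mul_norm_sub_starProjection_le (a : ℝ) (w : H) {z : H} (hz : z ∈ K) :
    |a| * ‖w - K.starProjection w‖ ≤ ‖a • w + z‖ := by
  have hres : a • w + z - K.starProjection (a • w + z) = a • (w - K.starProjection w) := by
    rw [map_add, map_smul, starProjection_eq_self_iff.2 hz, smul_sub]
    abel
  rw [← Real.norm_eq_abs, ← norm_smul, ← hres]
  exact norm_sub_starProjection_le _

variable {V : Submodule ℝ H} [V.HasOrthogonalProjection]

theorem norm_sq_starProjection_of_le (h : K ≤ V) (x : H) :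
    ‖V.starProjection x‖ ^ 2 =
      ‖K.starProjection x‖ ^ 2 + ‖V.starProjection x - K.starProjection x‖ ^ 2 := by
  have hKV : K.starProjection (V.starProjection x) = K.starProjection x := by
    rw [starProjection_apply, orthogonalProjectionOnto_starProjection_of_le h,
      ← starProjection_apply]
  rw [← norm_sq_starProjection_add_norm_sq_sub (K := K) (V.starProjection x), hKV]

theorem sq_inner_sub_starProjection_le (h : K ≤ V) (x : H) {v : H} (hv : v ∈ V) (hv1 : ‖v‖ ≤ 1) :
    ⟪x - K.starProjection x, v⟫ ^ 2 ≤ ‖V.starProjection x‖ ^ 2 - ‖K.starProjection x‖ ^ 2 := by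
  have hxv : ⟪x - K.starProjection x, v⟫ = ⟪V.starProjection x - K.starProjection x, v⟫ := by
    rw [← sub_add_sub_cancel x (V.starProjection x), inner_add_left,
      starProjection_inner_eq_zero x v hv, zero_add]
  have hcs : |⟪x - K.starProjection x, v⟫| ≤ ‖V.starProjection x - K.starProjection x‖ := by
    rw [hxv]
    exact (abs_real_inner_le_norm _ _).trans (mul_le_of_le_one_right (norm_nonneg _) hv1)
  rw [norm_sq_starProjection_of_le h x, add_sub_cancel_left, ← sq_abs]
  exact pow_le_pow_left₀ (abs_nonneg _) hcs 2

end Projection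

section Coefficients

def HasBoundedCoeffs (s : Finset H) (B : ℝ) : Prop :=
  ∀ g ∈ span ℝ (s : Set H), ∃ c : H → ℝ, g = ∑ v ∈ s, c v • v ∧ ∀ v ∈ s, |c v| ≤ B * ‖g‖

theorem hasBoundedCoeffs_empty (B : ℝ) : HasBoundedCoeffs (∅ : Finset H) B := by
  intro g hg
  rw [coe_empty, span_empty, mem_bot] at hg
  exact ⟨0, by simp [hg], by simp⟩

theorem HasBoundedCoeffs.mono {s : Finset H} {B B' : ℝ} (hs : HasBoundedCoeffs s B) (h : B ≤ B') :
    HasBoundedCoeffs s B' := by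
  intro g hg
  obtain ⟨c, hc, hcB⟩ := hs g hg
  exact ⟨c, hc, fun v hv => (hcB v hv).trans (mul_le_mul_of_nonneg_right h (norm_nonneg g))⟩

theorem HasBoundedCoeffs.insert [DecidableEq H] {s : Finset H} {B δ : ℝ} {w : H}
    (hs : HasBoundedCoeffs s B) (hB : 1 ≤ B) (hδ : 0 < δ) (hw : ‖w‖ ≤ 1)
    (hsep : δ ≤ ‖w - (span ℝ (s : Set H)).starProjection w‖) :
    HasBoundedCoeffs (insert w s) ((1 + δ⁻¹) * B) := by
  have hws : w ∉ s := fun hws => by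
    rw [starProjection_eq_self_iff.2 (subset_span hws), sub_self, norm_zero] at hsep
    exact hsep.not_gt hδ
  intro g hg
  rw [coe_insert, mem_span_insert] at hg
  obtain ⟨a, z, hz, rfl⟩ := hg
  have ha : |a| ≤ δ⁻¹ * ‖a • w + z‖ := by
    rw [inv_mul_eq_div, le_div_iff₀ hδ]
    exact (mul_le_mul_of_nonneg_left hsep (abs_nonneg a)).trans
      (abs_mul_norm_sub_starProjection_le a w hz)
  have hz_norm : ‖z‖ ≤ (1 + δ⁻¹) * ‖a • w + z‖ := by
    calc ‖z‖ = ‖(a • w + z) - a • w‖ := by rw [add_sub_cancel_left]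
      _ ≤ ‖a • w + z‖ + |a| * ‖w‖ := by
        rw [← Real.norm_eq_abs, ← norm_smul]; exact norm_sub_le _ _
      _ ≤ ‖a • w + z‖ + δ⁻¹ * ‖a • w + z‖ :=
        add_le_add_right ((mul_le_of_le_one_right (abs_nonneg a) hw).trans ha) _
      _ = (1 + δ⁻¹) * ‖a • w + z‖ := by ring
  obtain ⟨c, rfl, hcB⟩ := hs z hz
  refine ⟨Function.update c w a, ?_, fun v hv => ?_⟩
  · rw [sum_insert hws, Function.update_self]
    congr 1
    exact sum_congr rfl fun v hv => by rw [Function.update_of_ne (ne_of_mem_of_not_mem hv hws)]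
  · have hg0 := norm_nonneg (a • w + ∑ v ∈ s, c v • v)
    rcases Finset.mem_insert.1 hv with rfl | hv
    · rw [Function.update_self]
      refine ha.trans (mul_le_mul_of_nonneg_right ?_ hg0)
      nlinarith [inv_pos.2 hδ]
    · rw [Function.update_of_ne (ne_of_mem_of_not_mem hv hws)]
      calc |c v| ≤ B * ‖∑ v ∈ s, c v • v‖ := hcB v hv
        _ ≤ B * ((1 + δ⁻¹) * ‖a • w + ∑ v ∈ s, c v • v‖) := by gcongr
        _ = (1 + δ⁻¹) * B * ‖a • w + ∑ v ∈ s, c v • v‖ := by ring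

end Coefficients

section Greedy

variable (S : Set H) (f : H)

def IsGreedyFamily (δ : ℝ) (s : Finset H) : Prop :=
  (s : Set H) ⊆ S ∧ HasBoundedCoeffs s ((1 + δ⁻¹) ^ #s) ∧
    #s * δ ^ 2 ≤ ‖(span ℝ (s : Set H)).starProjection f‖ ^ 2

def IsPseudorandom (δ : ℝ) (x : H) : Prop := ∀ w ∈ S, |⟪x, w⟫| ≤ δ

variable {S f} {δ : ℝ} {s : Finset H}

theorem IsPseudorandom.mono {δ' : ℝ} {x : H} (hx : IsPseudorandom S δ x) (h : δ ≤ δ') :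
    IsPseudorandom S δ' x :=
  fun w hw => (hx w hw).trans h

theorem isGreedyFamily_empty (δ : ℝ) : IsGreedyFamily S f δ ∅ :=
  ⟨by simp, hasBoundedCoeffs_empty _, by simp⟩

theorem IsGreedyFamily.anti {δ' : ℝ} (hs : IsGreedyFamily S f δ s) (hδ' : 0 < δ') (h : δ' ≤ δ) :
    IsGreedyFamily S f δ' s :=
  have hδ : 0 < δ := hδ'.trans_le h
  ⟨hs.1, hs.2.1.mono (pow_le_pow_left₀ (by positivity) (by gcongr) _),
    le_trans (by gcongr) hs.2.2⟩

theorem notMem_of_lt_abs_inner {w : H} (hδ : 0 ≤ δ)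
    (hcorr : δ < |⟪f - (span ℝ (s : Set H)).starProjection f, w⟫|) : w ∉ s := fun hws => by
  rw [starProjection_inner_eq_zero f w (subset_span hws), abs_zero] at hcorr
  exact hcorr.not_ge hδ

theorem IsGreedyFamily.insert [DecidableEq H] (hS : ∀ v ∈ S, ‖v‖ ≤ 1) (hf : ‖f‖ ≤ 1)
    (hδ : 0 < δ) (hs : IsGreedyFamily S f δ s) {w : H} (hw : w ∈ S)
    (hcorr : δ < |⟪f - (span ℝ (s : Set H)).starProjection f, w⟫|) :
    IsGreedyFamily S f δ (insert w s) := by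
  have hws := notMem_of_lt_abs_inner hδ.le hcorr
  have hsep : δ ≤ ‖w - (span ℝ (s : Set H)).starProjection w‖ :=
    hcorr.le.trans ((abs_inner_sub_starProjection_le f w).trans
      (mul_le_of_le_one_left (norm_nonneg _) hf))
  have henergy := sq_inner_sub_starProjection_le (span_mono (coe_subset.2 (subset_insert w s))) f
    (subset_span (mem_insert_self w s)) (hS w hw)
  have hδ_sq : δ ^ 2 ≤ ⟪f - (span ℝ (s : Set H)).starProjection f, w⟫ ^ 2 :=
    (pow_le_pow_left₀ hδ.le hcorr.le 2).trans_eq (sq_abs _)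
  refine ⟨?_, ?_, ?_⟩
  · rw [coe_insert]; exact Set.insert_subset hw hs.1
  · rw [card_insert_of_notMem hws, pow_succ']
    exact hs.2.1.insert (one_le_pow₀ (by linarith [inv_pos.2 hδ])) hδ (hS w hw) hsep
  · rw [card_insert_of_notMem hws, Nat.cast_succ]
    linarith [hs.2.2]

theorem IsGreedyFamily.exists_isPseudorandom_superset (hS : ∀ v ∈ S, ‖v‖ ≤ 1) (hf : ‖f‖ ≤ 1)
    (hδ : 0 < δ) (hs : IsGreedyFamily S f δ s) :
    ∃ t, s ⊆ t ∧ IsGreedyFamily S f δ t ∧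
      IsPseudorandom S δ (f - (span ℝ (t : Set H)).starProjection f) := by
  classical
  have hcard : ∀ t, IsGreedyFamily S f δ t → #t ≤ ⌊(δ ^ 2)⁻¹⌋₊ := fun t ht =>
    Nat.le_floor <| by
      rw [← one_div, le_div_iff₀ (by positivity)]
      exact ht.2.2.trans (sq_norm_starProjection_le_one hf)
  refine strongDownwardInductionOn (p := fun s => IsGreedyFamily S f δ s → ∃ t, s ⊆ t ∧
    IsGreedyFamily S f δ t ∧ IsPseudorandom S δ (f - (span ℝ (t : Set H)).starProjection f))
    s (fun s ih _ hs => ?_) (hcard s hs) hs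
  by_cases hps : IsPseudorandom S δ (f - (span ℝ (s : Set H)).starProjection f)
  · exact ⟨s, subset_rfl, hs, hps⟩
  obtain ⟨w, hw, hcorr⟩ : ∃ w ∈ S, δ < |⟪f - (span ℝ (s : Set H)).starProjection f, w⟫| := by
    simpa [IsPseudorandom] using hps
  have hs' := hs.insert hS hf hδ hw hcorr
  obtain ⟨t, hst, ht⟩ := ih (hcard _ hs') (ssubset_insert (notMem_of_lt_abs_inner hδ.le hcorr)) hs'
  exact ⟨t, (subset_insert w s).trans hst, ht⟩

end Greedy

section Decomposition

variable (S : Set H)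

/-- `(M, M)`-structured vectors. -/
def IsStructured (M : ℕ) (g : H) : Prop :=
  ∃ (k : ℕ) (c : Fin k → ℝ) (v : Fin k → H),
    k ≤ M ∧ (∀ i, v i ∈ S ∧ |c i| ≤ (M : ℝ)) ∧ g = ∑ i, c i • v i

def HasDecomposition (M : ℕ) (δ ε : ℝ) (f : H) : Prop :=
  ∃ f_str f_psd f_err : H, IsStructured S M f_str ∧ f = f_str + f_psd + f_err ∧
    IsPseudorandom S δ f_psd ∧ ‖f_err‖ ≤ ε

variable {S}

theorem isStructured_sum {s : Finset H} {M : ℕ} {c : H → ℝ} (hs : (s : Set H) ⊆ S)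
    (hcard : #s ≤ M) (hc : ∀ v ∈ s, |c v| ≤ M) : IsStructured S M (∑ v ∈ s, c v • v) := by
  refine ⟨#s, fun i => c (s.equivFin.symm i), fun i => s.equivFin.symm i, hcard,
    fun i => ⟨hs (s.equivFin.symm i).2, hc _ (s.equivFin.symm i).2⟩, ?_⟩
  rw [← sum_coe_sort s]
  exact (Equiv.sum_comp s.equivFin.symm fun v : s => c v • (v : H)).symm

/-- Bound on the complexity of the structured part produced at threshold `D⁻¹`: at most `D ^ 2`
vectors, with coefficients at most `(D + 1) ^ D ^ 2`. -/
def structureBound (D : ℕ) : ℕ := D ^ 2 + (D + 1) ^ D ^ 2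

theorem IsGreedyFamily.isStructured {f : H} {s : Finset H} {D : ℕ} (hf : ‖f‖ ≤ 1) (hD : 0 < D)
    (hs : IsGreedyFamily S f (D : ℝ)⁻¹ s) :
    IsStructured S (structureBound D) ((span ℝ (s : Set H)).starProjection f) := by
  have hcard : #s ≤ D ^ 2 := by
    have h := hs.2.2.trans (sq_norm_starProjection_le_one hf)
    rw [inv_pow, ← div_eq_mul_inv, div_le_one (by positivity)] at h
    exact_mod_cast h
  obtain ⟨c, hc, hcB⟩ := hs.2.1 _ (starProjection_apply_mem _ f)
  rw [inv_inv, add_comm] at hcB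
  rw [hc]
  refine isStructured_sum hs.1 (hcard.trans (Nat.le_add_right _ _)) fun v hv => ?_
  calc |c v| ≤ ((D : ℝ) + 1) ^ #s * ‖(span ℝ (s : Set H)).starProjection f‖ := hcB v hv
    _ ≤ ((D : ℝ) + 1) ^ D ^ 2 * 1 := by
      gcongr
      · linarith
      · exact (norm_starProjection_apply_le _ f).trans hf
    _ ≤ structureBound D := by
      rw [mul_one]; exact_mod_cast Nat.le_add_left _ _

theorem hasDecomposition_of_energy_gap {f : H} {s t : Finset H} {D : ℕ} {δ ε : ℝ}
    (hf : ‖f‖ ≤ 1) (hD : 0 < D) (hs : IsGreedyFamily S f (D : ℝ)⁻¹ s) (hst : s ⊆ t)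
    (ht : IsPseudorandom S δ (f - (span ℝ (t : Set H)).starProjection f)) (hε : 0 ≤ ε)
    (hgap : ‖(span ℝ (t : Set H)).starProjection f‖ ^ 2 ≤
      ‖(span ℝ (s : Set H)).starProjection f‖ ^ 2 + ε ^ 2) :
    HasDecomposition S (structureBound D) δ ε f := by
  set Ps := (span ℝ (s : Set H)).starProjection f
  set Pt := (span ℝ (t : Set H)).starProjection f
  refine ⟨Ps, f - Pt, Pt - Ps, hs.isStructured hf hD, by abel, ht, ?_⟩
  have hpyth := norm_sq_starProjection_of_le (span_mono (coe_subset.2 hst)) f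
  exact (pow_le_pow_iff_left₀ (norm_nonneg _) hε two_ne_zero).1 (by linarith)

end Decomposition

section Iteration

/-- Stage `j` of the energy increment runs the greedy algorithm at threshold `(scale F j)⁻¹`. -/
noncomputable def scale (F : ℕ → ℝ) : ℕ → ℕ
  | 0 => 1
  | j + 1 => max (scale F j) ⌈F (structureBound (scale F j))⌉₊

theorem scale_pos (F : ℕ → ℝ) : ∀ j, 0 < scale F j
  | 0 => Nat.one_pos
  | j + 1 => lt_max_of_lt_left (scale_pos F j)

theorem inv_scale_succ_le_inv_scale (F : ℕ → ℝ) (j : ℕ) :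
    ((scale F (j + 1) : ℕ) : ℝ)⁻¹ ≤ ((scale F j : ℕ) : ℝ)⁻¹ :=
  inv_anti₀ (by exact_mod_cast scale_pos F j) (by exact_mod_cast le_max_left _ _)

theorem inv_scale_succ_le {F : ℕ → ℝ} (j : ℕ) (hF : 0 < F (structureBound (scale F j))) :
    ((scale F (j + 1) : ℕ) : ℝ)⁻¹ ≤ 1 / F (structureBound (scale F j)) := by
  rw [one_div]
  exact inv_anti₀ hF ((Nat.le_ceil _).trans (by exact_mod_cast le_max_right _ _))

theorem exists_isGreedyFamily_energy_ge {S : Set H} {f : H} {F : ℕ → ℝ} {ε : ℝ}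
    (hS : ∀ v ∈ S, ‖v‖ ≤ 1) (hf : ‖f‖ ≤ 1) (hF : ∀ n, 0 < F n) (hε : 0 ≤ ε) (j : ℕ)
    (hno : ∀ i < j, ¬HasDecomposition S (structureBound (scale F i))
      (1 / F (structureBound (scale F i))) ε f) :
    ∃ s, IsGreedyFamily S f ((scale F j : ℕ) : ℝ)⁻¹ s ∧
      j * ε ^ 2 ≤ ‖(span ℝ (s : Set H)).starProjection f‖ ^ 2 := by
  induction j with
  | zero => exact ⟨∅, isGreedyFamily_empty _, by simp⟩
  | succ j ih =>
    obtain ⟨s, hs, hE⟩ := ih fun i hi => hno i (Nat.lt_succ_of_lt hi)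
    have hδ : (0 : ℝ) < ((scale F (j + 1) : ℕ) : ℝ)⁻¹ := by
      have := scale_pos F (j + 1); positivity
    obtain ⟨t, hst, ht, hpsd⟩ :=
      (hs.anti hδ (inv_scale_succ_le_inv_scale F j)).exists_isPseudorandom_superset hS hf hδ
    refine ⟨t, ht, not_lt.1 fun hgap => hno j (Nat.lt_succ_self j) ?_⟩
    refine hasDecomposition_of_energy_gap hf (scale_pos F j) hs hst
      (hpsd.mono (inv_scale_succ_le j (hF _))) hε ?_
    push_cast at hgap
    linarith

end Iteration

end StrongStructure

open StrongStructure

theorem stmt_8 (ε : ℝ) (hε : 0 < ε) (F : ℕ → ℝ) (hF : ∀ n, 0 < F n) :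
    ∃ C : ℕ, ∀ (H : Type) [NormedAddCommGroup H] [InnerProductSpace ℝ H]
      [FiniteDimensional ℝ H] (S : Set H), (∀ v ∈ S, ‖v‖ ≤ 1) →
      ∀ f : H, ‖f‖ ≤ 1 →
        ∃ M : ℕ, M ≤ C ∧
          ∃ (k : ℕ) (c : Fin k → ℝ) (v : Fin k → H) (f_psd f_err : H),
            k ≤ M ∧
            (∀ i, v i ∈ S ∧ |c i| ≤ (M : ℝ)) ∧
            f = (∑ i, c i • v i) + f_psd + f_err ∧
            (∀ w ∈ S, |⟪f_psd, w⟫| ≤ 1 / F M) ∧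
            ‖f_err‖ ≤ ε := by
  set T := ⌊(ε ^ 2)⁻¹⌋₊ + 1
  refine ⟨(Finset.range T).sup fun j => structureBound (scale F j), fun H _ _ _ S hS f hf => ?_⟩
  by_contra hcon
  obtain ⟨s, -, hE⟩ := exists_isGreedyFamily_energy_ge hS hf hF hε.le T
    fun i hi ⟨_, f_psd, f_err, ⟨k, c, v, hk, hcv, rfl⟩, hsum, hpsd, herr⟩ =>
      hcon ⟨_, Finset.le_sup (Finset.mem_range.2 hi), k, c, v, f_psd, f_err, hk, hcv, hsum, hpsd,
        herr⟩
  have hT : 1 < T * ε ^ 2 := by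
    have h := Nat.lt_floor_add_one ((ε ^ 2)⁻¹)
    rw [inv_lt_iff_one_lt_mul₀ (by positivity)] at h
    exact_mod_cast h
  linarith [sq_norm_starProjection_le_one (K := span ℝ (s : Set H)) hf]
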